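/- For the optimal discrimination measurement π_l = (1/2)(|a⟩ + (−1)^l|b⟩)(⟨a| + (−1)^l⟨b|) applied to equiprobable states |Ψ_l⟩ = (1/√2)[√(1+c)|a⟩ + (−1)^l√(1−c)|b⟩], the mutual information between the measurement outcome and the state label equals 1 − h[(1 + √(1−c²))/2], where h is the binary entropy. -/

import Mathlib

/-! Measuring `|Ψ_l⟩` with `π_m` gives `⟨a + (-1)^m b, Ψ_l⟩ = (√(1+c) ± √(1-c))/√2`,
whose square is `1 ± √(1-c²)`, the sign being `(-1)^(l+m)`. So label and outcome are the
input and output of a binary symmetric channel with uniform input and success probability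
`q = (1 + √(1-c²))/2`: both marginals are uniform (one bit each) and the joint entropy is `1 + h(q)`. -/

open Real Finset

noncomputable section

/-- Binary entropy (base 2). -/
def binEnt (q : ℝ) : ℝ := -q * logb 2 q - (1 - q) * logb 2 (1 - q)

/-- The states |Ψ_l⟩ = (1/√2)[√(1+c)|a⟩ + (−1)^l √(1−c)|b⟩]. -/
def Ψ {H : Type*} [NormedAddCommGroup H] [InnerProductSpace ℂ H]
    (a b : H) (c : ℝ) (l : Fin 2) : H :=
  ((Real.sqrt 2 : ℝ) : ℂ)⁻¹ •
    (((Real.sqrt (1 + c) : ℝ) : ℂ) • a +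
      ((-1 : ℂ)^(l : ℕ) * ((Real.sqrt (1 - c) : ℝ) : ℂ)) • b)

/-- Joint probability of preparing |Ψ_l⟩ (prob 1/2) and obtaining outcome m of the
POVM π_m = (1/2)|a+(−1)^m b⟩⟨a+(−1)^m b|: p(l,m) = (1/2)·⟨Ψ_l|π_m|Ψ_l⟩. -/
def jointProb {H : Type*} [NormedAddCommGroup H] [InnerProductSpace ℂ H]
    (a b : H) (c : ℝ) (l m : Fin 2) : ℝ :=
  (1/2) * ((1/2) * ‖(inner ℂ (a + ((-1 : ℂ)^(m : ℕ)) • b) (Ψ a b c l) : ℂ)‖^2)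

/-- Joint law of input and output of a binary symmetric channel with uniform input and
crossover probability `1 - q`. -/
def bscJoint (q : ℝ) (l m : Fin 2) : ℝ := if l = m then q / 2 else (1 - q) / 2

lemma bscJoint_half_one_add (s : ℝ) (l m : Fin 2) :
    bscJoint ((1 + s) / 2) l m = (1 + (-1) ^ ((l : ℕ) + m) * s) / 4 := by
  fin_cases l <;> fin_cases m <;> grind [bscJoint]

lemma mul_logb_half (q : ℝ) : q / 2 * logb 2 (q / 2) = (q * logb 2 q - q) / 2 := by
  rcases eq_or_ne q 0 with rfl | hq
  · simp
  · rw [logb_div hq two_ne_zero, logb_self_eq_one one_lt_two]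
    ring

lemma sum_bscJoint_left (q : ℝ) (m : Fin 2) : ∑ l : Fin 2, bscJoint q l m = 1 / 2 := by
  fin_cases m <;> grind [bscJoint, Fin.sum_univ_two]

lemma sum_bscJoint_right (q : ℝ) (l : Fin 2) : ∑ m : Fin 2, bscJoint q l m = 1 / 2 := by
  fin_cases l <;> grind [bscJoint, Fin.sum_univ_two]

lemma entropy_bscJoint (q : ℝ) :
    -∑ l : Fin 2, ∑ m : Fin 2, bscJoint q l m * logb 2 (bscJoint q l m) = 1 + binEnt q := by
  simp only [Fin.sum_univ_two, bscJoint, Fin.isValue, if_true, zero_ne_one, one_ne_zero,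
    if_false, mul_logb_half, binEnt]
  ring

lemma entropy_uniform_two : -∑ _i : Fin 2, (1 / 2 : ℝ) * logb 2 (1 / 2) = 1 := by
  simp

section

variable {H : Type*} [NormedAddCommGroup H] [InnerProductSpace ℂ H]

lemma inner_add_smul_Ψ {a b : H} (ha : ‖a‖ = 1) (hb : ‖b‖ = 1)
    (hab : (inner ℂ a b : ℂ) = 0) (c : ℝ) (z : ℂ) (l : Fin 2) :
    inner ℂ (a + z • b) (Ψ a b c l) =
      ((√2)⁻¹ : ℂ) * (√(1 + c) + (starRingEnd ℂ z * (-1) ^ (l : ℕ)) * √(1 - c)) := by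
  have hba : (inner ℂ b a : ℂ) = 0 := by rw [← inner_conj_symm, hab, map_zero]
  have haa : (inner ℂ a a : ℂ) = 1 := by rw [inner_self_eq_norm_sq_to_K, ha]; norm_num
  have hbb : (inner ℂ b b : ℂ) = 1 := by rw [inner_self_eq_norm_sq_to_K, hb]; norm_num
  simp only [Ψ, inner_add_left, inner_add_right, inner_smul_left, inner_smul_right,
    haa, hab, hba, hbb]
  ring

lemma sq_sqrt_add_sign_mul_sqrt {c ε : ℝ} (hc : c ∈ Set.Icc (-1 : ℝ) 1) (hε : ε ^ 2 = 1) :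
    (√(1 + c) + ε * √(1 - c)) ^ 2 = 2 * (1 + ε * √(1 - c ^ 2)) := by
  obtain ⟨hc0, hc1⟩ := hc
  have hprod : √(1 + c) * √(1 - c) = √(1 - c ^ 2) := by
    rw [← sqrt_mul (by linarith)]; ring_nf
  calc (√(1 + c) + ε * √(1 - c)) ^ 2
      = √(1 + c) ^ 2 + ε ^ 2 * √(1 - c) ^ 2 + 2 * ε * (√(1 + c) * √(1 - c)) := by ring
    _ = 2 * (1 + ε * √(1 - c ^ 2)) := by
      rw [sq_sqrt (by linarith), sq_sqrt (by linarith), hε, hprod]; ring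

lemma jointProb_eq_bscJoint {a b : H} (ha : ‖a‖ = 1) (hb : ‖b‖ = 1)
    (hab : (inner ℂ a b : ℂ) = 0) {c : ℝ} (hc : c ∈ Set.Icc (-1 : ℝ) 1) :
    jointProb a b c = bscJoint ((1 + √(1 - c ^ 2)) / 2) := by
  ext l m
  have hsign : ((-1 : ℝ) ^ ((l : ℕ) + m)) ^ 2 = 1 := by
    rw [← pow_mul, mul_comm, pow_mul, neg_one_sq, one_pow]
  have hinner : inner ℂ (a + ((-1 : ℂ) ^ (m : ℕ)) • b) (Ψ a b c l) =
      (((√2)⁻¹ * (√(1 + c) + (-1) ^ ((l : ℕ) + m) * √(1 - c)) : ℝ) : ℂ) := by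
    rw [inner_add_smul_Ψ ha hb hab]
    push_cast
    simp only [map_pow, map_neg, map_one]
    ring
  rw [jointProb, hinner, Complex.norm_real, norm_eq_abs, sq_abs, mul_pow,
    sq_sqrt_add_sign_mul_sqrt hc hsign, inv_pow, sq_sqrt zero_le_two, bscJoint_half_one_add]
  ring

end

/-- the mutual information between outcome and label equals
1 − h[(1+√(1−c²))/2]. -/
theorem stmt11 {H : Type*} [NormedAddCommGroup H] [InnerProductSpace ℂ H]
    (a b : H) (c : ℝ) (hc : c ∈ Set.Icc (0:ℝ) 1)
    (ha : ‖a‖ = 1) (hb : ‖b‖ = 1) (hab : (inner ℂ a b : ℂ) = 0)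
    (HX HY HXY : ℝ)
    (hHX : HX = -∑ l : Fin 2,
      (∑ m : Fin 2, jointProb a b c l m) * logb 2 (∑ m : Fin 2, jointProb a b c l m))
    (hHY : HY = -∑ m : Fin 2,
      (∑ l : Fin 2, jointProb a b c l m) * logb 2 (∑ l : Fin 2, jointProb a b c l m))
    (hHXY : HXY = -∑ l : Fin 2, ∑ m : Fin 2,
      jointProb a b c l m * logb 2 (jointProb a b c l m)) :
    HX + HY - HXY = 1 - binEnt ((1 + Real.sqrt (1 - c^2)) / 2) := by
  rw [jointProb_eq_bscJoint ha hb hab ⟨by linarith [hc.1], hc.2⟩] at hHX hHY hHXY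
  simp only [sum_bscJoint_left, sum_bscJoint_right, entropy_uniform_two] at hHX hHY
  rw [entropy_bscJoint] at hHXY
  rw [hHX, hHY, hHXY]
  ring
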